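/- Let S be an inverse semigroup with a zero element 0 such that Z(S)× is nonempty. Then gr(Γ(S)) = 3 if and only if Γ(S) contains a cycle of odd length. -/

import Mathlib

namespace ZDG

variable {S : Type*} [Semigroup S]

/-- The natural partial order on an inverse semigroup: `a ≤ b` iff `a = e * b`
for some idempotent `e`. -/
def nle (a b : S) : Prop := ∃ e : S, e * e = e ∧ a = e * b

/-- `omg a b` is the set `ω(a,b)` of common lower bounds of `a` and `b` with respect
to the natural partial order. -/
def omg (a b : S) : Set S := {c | nle c a ∧ nle c b}

lemma omg_comm (a b : S) : omg a b = omg b a := by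
  ext c; exact and_comm

/-- `Zx z` is the set `Z(S)×` of nonzero zero-divisors of `S` (with zero element `z`). -/
def Zx (z : S) : Set S := {a | a ≠ z ∧ ∃ b : S, b ≠ z ∧ omg a b = {z}}

/-- The zero-divisor graph `Γ(S)`: vertices are the elements of `Z(S)×`, and two
distinct vertices `a`, `b` are adjacent iff `ω(a,b) = {z}`. -/
def ZDGraph (z : S) : SimpleGraph (Zx z) where
  Adj a b := (a : S) ≠ (b : S) ∧ omg (a : S) (b : S) = {z}
  symm := by
    constructor
    rintro a b ⟨h1, h2⟩
    exact ⟨fun h => h1 h.symm, (omg_comm (b : S) (a : S)).trans h2⟩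
  loopless := by constructor; rintro a ⟨h1, -⟩; exact h1 rfl

/-- The set of minimal elements of `S \ {z}` with respect to the natural partial order. -/
def MinOf (z : S) : Set S := {x | x ≠ z ∧ ∀ y : S, y ≠ z → nle y x → y = x}

/-- The annihilator of `x`: the set of `y` with `ω(x,y) = {z}`. -/
def Ann (z : S) (x : S) : Set S := {y | omg x y = {z}}

end ZDG

open ZDG

section Aux

variable {S : Type*} [Semigroup S]
variable (hinv : ∀ a : S, ∃ b : S, a * b * a = a ∧ b * a * b = b)
variable (hcomm : ∀ e f : S, e * e = e → f * f = f → e * f = f * e)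
variable {z : S} (hz : ∀ x : S, z * x = z ∧ x * z = z)

include hinv in
lemma ZDG.nle_refl (x : S) : nle x x := by
  obtain ⟨b, h1, _⟩ := hinv x
  refine ⟨x * b, ?_, ?_⟩
  · calc x * b * (x * b) = (x * b * x) * b := (mul_assoc (x*b) x b).symm
    _ = x * b := by rw [h1]
  · rw [h1]

include hz in
lemma ZDG.nle_z (x : S) : nle z x := ⟨z, (hz z).1, ((hz x).1).symm⟩

include hz in
lemma ZDG.z_mem_omg (a b : S) : z ∈ omg a b := ⟨nle_z hz a, nle_z hz b⟩

include hcomm in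
lemma ZDG.nle_trans {a b c : S} (h1 : nle a b) (h2 : nle b c) : nle a c := by
  obtain ⟨e, he, hae⟩ := h1
  obtain ⟨f, hf, hbf⟩ := h2
  refine ⟨e * f, ?_, ?_⟩
  · calc e * f * (e * f) = e * (f * e) * f := by simp [mul_assoc]
    _ = e * (e * f) * f := by rw [hcomm e f he hf]
    _ = (e * e) * (f * f) := by simp [mul_assoc]
    _ = e * f := by rw [he, hf]
  · rw [hae, hbf, mul_assoc]

include hcomm hz in
lemma ZDG.omg_down {d a y : S} (hd : nle d a) (h : omg a y = {z}) : omg d y = {z} := by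
  apply Set.eq_singleton_iff_unique_mem.2
  refine ⟨z_mem_omg hz d y, fun c hc => ?_⟩
  have : c ∈ omg a y := ⟨nle_trans hcomm hc.1 hd, hc.2⟩
  rw [h] at this; exact this

include hinv in
lemma ZDG.ne_of_omg {d y : S} (h : omg d y = {z}) (hdz : d ≠ z) : d ≠ y := by
  intro he
  apply hdz
  have : d ∈ omg d y := ⟨nle_refl hinv d, he ▸ nle_refl hinv d⟩
  rw [h] at this; exact this

include hz in
lemma ZDG.exists_ne_of_omg_ne {a b : S} (h : omg a b ≠ {z}) : ∃ d ∈ omg a b, d ≠ z := by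
  by_contra hc
  push_neg at hc
  exact h (Set.eq_singleton_iff_unique_mem.2 ⟨z_mem_omg hz a b, hc⟩)

include hinv hcomm hz in
/-- Key reduction: an odd closed walk in the zero-divisor graph yields a triangle. -/
lemma ZDG.walk_tri :
    ∀ n : ℕ, ∀ (v : Zx z) (w : (ZDGraph z).Walk v v), w.length ≤ n → Odd w.length →
      ∃ a b c : Zx z, (ZDGraph z).Adj a b ∧ (ZDGraph z).Adj b c ∧ (ZDGraph z).Adj c a := by
  intro n
  induction n with
  | zero =>
    intro v w hl ho
    rw [Nat.odd_iff] at ho; omega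
  | succ n ih =>
    intro v w hl ho
    cases w with
    | nil => rw [Nat.odd_iff] at ho; simp at ho
    | cons h p =>
      rename_i v1
      cases p with
      | nil => exact absurd rfl h.ne
      | cons h2 p2 =>
        rename_i v2
        by_cases hv02 : v = v2
        · subst hv02
          apply ih v p2
          · simp only [SimpleGraph.Walk.length_cons] at hl; omega
          · simp only [SimpleGraph.Walk.length_cons, Nat.odd_iff] at ho ⊢; omega
        · by_cases hadj : (ZDGraph z).Adj v v2
          · exact ⟨v, v1, v2, h, h2, hadj.symm⟩
          · have hcoene : (v : S) ≠ (v2 : S) := fun hh => hv02 (Subtype.ext hh)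
            have homgne : omg (v : S) (v2 : S) ≠ {z} := fun hh => hadj ⟨hcoene, hh⟩
            obtain ⟨d, hdmem, hdz⟩ := exists_ne_of_omg_ne hz homgne
            have hdv : nle d (v : S) := hdmem.1
            have hdv2 : nle d (v2 : S) := hdmem.2
            have hdv1 : omg d (v1 : S) = {z} := omg_down hcomm hz hdv h.2
            have hdZ : d ∈ Zx z := ⟨hdz, v1, v1.2.1, hdv1⟩
            cases p2 with
            | nil => exact absurd rfl hv02
            | cons h3 p3 =>
              rename_i v3
              have hdv3 : omg d (v3 : S) = {z} := omg_down hcomm hz hdv2 h3.2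
              have adj1 : (ZDGraph z).Adj ⟨d, hdZ⟩ v3 := ⟨ne_of_omg hinv hdv3 hdz, hdv3⟩
              by_cases hnil : p3.Nil
              · have hv3v : v3 = v := hnil.eq
                subst hv3v
                exact absurd h3.symm hadj
              · have hn' : ¬ p3.reverse.Nil := by
                  rwa [SimpleGraph.Walk.nil_iff_length_eq, SimpleGraph.Walk.length_reverse,
                    ← SimpleGraph.Walk.nil_iff_length_eq]
                obtain ⟨u, hlast, q, hq⟩ := SimpleGraph.Walk.not_nil_iff.1 hn'
                have hdu : omg d (u : S) = {z} := omg_down hcomm hz hdv hlast.2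
                have adj2 : (ZDGraph z).Adj u ⟨d, hdZ⟩ :=
                  ⟨fun hh => (ne_of_omg hinv hdu hdz) hh.symm, (omg_comm (u : S) d).trans hdu⟩
                refine ih ⟨d, hdZ⟩
                  (SimpleGraph.Walk.cons adj1
                    (q.reverse.append (SimpleGraph.Walk.cons adj2 SimpleGraph.Walk.nil))) ?_ ?_
                all_goals
                  have hplen : p3.length = q.length + 1 := by
                    have := congrArg SimpleGraph.Walk.length hq
                    simpa using this
                  simp only [SimpleGraph.Walk.length_cons, SimpleGraph.Walk.length_append,
                    SimpleGraph.Walk.length_reverse, SimpleGraph.Walk.length_nil,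
                    Nat.odd_iff] at hl ho ⊢
                  omega

end Aux

lemma tri_cycle {α : Type*} {G : SimpleGraph α} {a b c : α}
    (hab : G.Adj a b) (hbc : G.Adj b c) (hca : G.Adj c a) :
    ∃ (v : α) (w : G.Walk v v), w.IsCycle ∧ w.length = 3 := by
  refine ⟨a, SimpleGraph.Walk.cons hab (SimpleGraph.Walk.cons hbc
    (SimpleGraph.Walk.cons hca SimpleGraph.Walk.nil)), ?_, rfl⟩
  have h1 := hab.ne
  have h2 := hbc.ne
  have h3 := hca.ne
  simp [SimpleGraph.Walk.isCycle_def, SimpleGraph.Walk.isTrail_def, h1, h2, h3,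
    h1.symm, h2.symm, h3.symm]

lemma egirth_eq_three_of_tri {α : Type*} {G : SimpleGraph α} {a b c : α}
    (hab : G.Adj a b) (hbc : G.Adj b c) (hca : G.Adj c a) : G.egirth = 3 := by
  obtain ⟨v, w, hw, hl⟩ := tri_cycle hab hbc hca
  refine le_antisymm ?_ SimpleGraph.three_le_egirth
  calc G.egirth ≤ (w.length : ℕ∞) := iInf_le_of_le v (iInf_le_of_le w (iInf_le _ hw))
    _ = 3 := by rw [hl]; rfl

/-- `gr(Γ(S)) = 3` iff `Γ(S)` contains a cycle of odd length. -/
theorem stmt10 {S : Type*} [Semigroup S] [Nontrivial S]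
    (hinv : ∀ a : S, ∃ b : S, a * b * a = a ∧ b * a * b = b)
    (hcomm : ∀ e f : S, e * e = e → f * f = f → e * f = f * e)
    (z : S) (hz : ∀ x : S, z * x = z ∧ x * z = z)
    (h1 : (Zx z).Nonempty) :
    (ZDGraph z).egirth = 3 ↔
      ∃ (v : Zx z) (w : (ZDGraph z).Walk v v), w.IsCycle ∧ Odd w.length := by
  constructor
  · intro hg
    have hna : ¬ (ZDGraph z).IsAcyclic := by
      intro hac
      rw [hac.egirth_eq_top] at hg
      simp at hg
    obtain ⟨a, w, hw, hlen⟩ := SimpleGraph.exists_egirth_eq_length.2 hna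
    have h3 : w.length = 3 := by exact_mod_cast (hg.symm.trans hlen).symm
    exact ⟨a, w, hw, by rw [h3]; exact ⟨1, rfl⟩⟩
  · rintro ⟨v, w, hw, hodd⟩
    obtain ⟨a, b, c, hab, hbc, hca⟩ :=
      ZDG.walk_tri hinv hcomm hz w.length v w le_rfl hodd
    exact egirth_eq_three_of_tri hab hbc hca
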